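/- For every A ∈ ℕ₀, the sum ∑_{s=0}^{A} |1 − 2φ(s)| lies between A/2 and A/2 + 1. -/

import Mathlib

open MeasureTheory Finset

/-- Base-2 radical inverse: for `n = ∑ nᵢ 2ⁱ`, `radInv n = ∑ nᵢ 2^{-i-1}`. -/
noncomputable def radInv (n : ℕ) : ℝ :=
  ∑ i ∈ Finset.range n, if n.testBit i then (1:ℝ)/2^(i+1) else 0

/-- L∞-normalized Haar function supported on `I_{j,m} = [m/2^j, (m+1)/2^j)`. -/
noncomputable def haarFn (j m : ℕ) (t : ℝ) : ℝ :=
  if (m:ℝ)/2^j ≤ t ∧ t < (m:ℝ)/2^j + 1/2^(j+1) then 1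
  else if (m:ℝ)/2^j + 1/2^(j+1) ≤ t ∧ t < ((m:ℝ)+1)/2^j then -1
  else 0

/-- Local discrepancy of the first `N` terms of the sequence `x`. -/
noncomputable def disc (x : ℕ → ℝ) (N : ℕ) (t : ℝ) : ℝ :=
  (∑ n ∈ Finset.range N, Set.indicator (Set.Ico (0:ℝ) t) (fun _ => (1:ℝ)) (x n)) / N - t

/-- Symmetrized van der Corput sequence: `z_{2m} = φ(m)`, `z_{2m+1} = 1 - φ(m)`. -/
noncomputable def vdcSym (n : ℕ) : ℝ :=
  if n % 2 = 0 then radInv (n / 2) else 1 - radInv (n / 2)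

/-- Haar coefficient `μ_{j,m}` of the local discrepancy of the first `N` terms of `x`. -/
noncomputable def haarCoeff (x : ℕ → ℝ) (N j m : ℕ) : ℝ :=
  ∫ t in (0:ℝ)..1, disc x N t * haarFn j m t

/-!
Reading off the lowest binary digit gives `φ(2k) = φ(k)/2` and `φ(2k+1) = (1 + φ(k))/2`, so
`|1 - 2φ(2k)| + |1 - 2φ(2k+1)| = (1 - φ(k)) + φ(k) = 1` since `0 ≤ φ(k) ≤ 1`. Summing in pairs, the sum
up to `A = 2k + 1` is exactly `k + 1`, and the sum up to `A = 2k` is `k + (1 - φ(k)) ∈ [k, k + 1]`.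
-/

lemma radInv_nonneg (n : ℕ) : 0 ≤ radInv n :=
  sum_nonneg fun _ _ => by split <;> positivity

lemma radInv_le_one (n : ℕ) : radInv n ≤ 1 :=
  calc radInv n ≤ ∑ i ∈ range n, (1 / 2 : ℝ) ^ i / 2 :=
        sum_le_sum fun i _ => by split <;> [rw [div_pow, one_pow, pow_succ, div_div]; positivity]
    _ = (∑ i ∈ range n, (1 / 2 : ℝ) ^ i) / 2 := by rw [sum_div]
    _ ≤ 1 := by linarith [sum_geometric_two_le n]

lemma radInv_eq_sum_range_of_le {n K : ℕ} (h : n ≤ K) :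
    radInv n = ∑ i ∈ range K, if n.testBit i then (1 : ℝ) / 2 ^ (i + 1) else 0 := by
  refine sum_subset (range_subset_range.2 h) fun i _ hi => ?_
  have hn : n < 2 ^ i := n.lt_two_pow_self.trans_le (Nat.pow_le_pow_right two_pos (by simpa using hi))
  simp [Nat.testBit_eq_false_of_lt hn]

lemma radInv_bit (b : Bool) (m : ℕ) : radInv (Nat.bit b m) = (b.toNat + radInv m) / 2 := by
  have hm : m ≤ Nat.bit b m := by rw [Nat.bit_val]; omega
  rw [radInv_eq_sum_range_of_le (Nat.le_succ _), sum_range_succ', radInv_eq_sum_range_of_le hm,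
    add_div, add_comm, sum_div]
  congr 1
  · cases b <;> simp
  · refine sum_congr rfl fun i _ => ?_
    rw [Nat.testBit_bit_succ]
    split <;> ring

lemma radInv_two_mul (m : ℕ) : radInv (2 * m) = radInv m / 2 := by
  simpa using radInv_bit false m

lemma radInv_two_mul_add_one (m : ℕ) : radInv (2 * m + 1) = (1 + radInv m) / 2 := by
  simpa [Nat.bit_val] using radInv_bit true m

lemma abs_one_sub_two_radInv_two_mul (k : ℕ) : |1 - 2 * radInv (2 * k)| = 1 - radInv k := by
  rw [radInv_two_mul, abs_of_nonneg (by linarith [radInv_le_one k])]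
  ring

lemma abs_one_sub_two_radInv_two_mul_add_one (k : ℕ) :
    |1 - 2 * radInv (2 * k + 1)| = radInv k := by
  rw [radInv_two_mul_add_one, abs_of_nonpos (by linarith [radInv_nonneg k])]
  ring

lemma sum_range_two_mul_abs_one_sub_two_radInv (k : ℕ) :
    ∑ s ∈ range (2 * k), |1 - 2 * radInv s| = k := by
  induction k with
  | zero => simp
  | succ k ih =>
    rw [Nat.mul_succ, sum_range_succ, sum_range_succ, ih, abs_one_sub_two_radInv_two_mul,
      abs_one_sub_two_radInv_two_mul_add_one]
    push_cast
    ring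

theorem sum_abs_one_sub_two_radInv_bounds (A : ℕ) :
    (A:ℝ)/2 ≤ ∑ s ∈ Finset.range (A+1), |1 - 2 * radInv s| ∧
      ∑ s ∈ Finset.range (A+1), |1 - 2 * radInv s| ≤ (A:ℝ)/2 + 1 := by
  obtain ⟨k, rfl | rfl⟩ := Nat.even_or_odd' A
  · rw [sum_range_succ, sum_range_two_mul_abs_one_sub_two_radInv, abs_one_sub_two_radInv_two_mul]
    push_cast
    constructor <;> linarith [radInv_nonneg k, radInv_le_one k]
  · rw [show 2 * k + 1 + 1 = 2 * (k + 1) by ring, sum_range_two_mul_abs_one_sub_two_radInv]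
    push_cast
    constructor <;> linarith
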